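/- The maximum of det B(A₅, x, y, 1) over all vectors x, y ∈ {0, 1}⁵, where A₅ is the upper-left 5 × 5 submatrix of A₁₅, equals 9, and this maximum is attained by the bordering that yields A₆ (the upper-left 6 × 6 submatrix of A₁₅). -/

import Mathlib

open Matrix

/-- The bordered matrix `B(A, x, y, z)`: upper-left `n × n` block `A`, first `n` entries of the
last column given by `y`, first `n` entries of the last row given by `x`, corner entry `z`. -/
def border {n : ℕ} (A : Matrix (Fin n) (Fin n) ℤ) (x y : Fin n → ℤ) (z : ℤ) :
    Matrix (Fin (n + 1)) (Fin (n + 1)) ℤ :=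
  Matrix.of fun i j =>
    if hi : (i : ℕ) < n then
      if hj : (j : ℕ) < n then A ⟨i, hi⟩ ⟨j, hj⟩ else y ⟨i, hi⟩
    else
      if hj : (j : ℕ) < n then x ⟨j, hj⟩ else z

/-- The matrix `A₁₅` from the paper. -/
def A15 : Matrix (Fin 15) (Fin 15) ℤ :=
  !![1, 0, 1, 1, 0, 0, 0, 0, 0, 0, 1, 0, 0, 1, 1;
      1, 1, 0, 0, 0, 1, 0, 1, 1, 1, 1, 0, 0, 0, 0;
      0, 1, 1, 0, 1, 0, 0, 1, 0, 0, 1, 1, 0, 1, 0;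
      0, 1, 0, 1, 1, 1, 0, 0, 0, 0, 0, 0, 1, 0, 1;
      1, 0, 0, 0, 1, 1, 1, 1, 0, 0, 0, 0, 0, 1, 0;
      0, 0, 1, 0, 0, 1, 1, 0, 1, 0, 0, 0, 1, 1, 0;
      0, 1, 0, 1, 0, 0, 1, 1, 0, 0, 1, 0, 1, 1, 0;
      0, 0, 1, 1, 0, 1, 0, 1, 0, 1, 0, 1, 1, 0, 0;
      0, 0, 0, 1, 1, 0, 0, 1, 1, 1, 0, 0, 0, 1, 1;
      1, 1, 1, 0, 1, 0, 1, 0, 0, 1, 0, 0, 1, 0, 0;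
      0, 0, 0, 0, 1, 1, 1, 0, 0, 1, 1, 1, 0, 0, 1;
      1, 1, 0, 1, 0, 0, 1, 0, 1, 0, 0, 1, 0, 0, 0;
      1, 0, 0, 0, 1, 0, 0, 1, 1, 0, 1, 1, 1, 0, 1;
      1, 1, 0, 0, 0, 1, 0, 0, 0, 1, 0, 1, 1, 1, 1;
      0, 1, 1, 0, 0, 0, 1, 1, 0, 0, 0, 0, 0, 0, 1]

/-- `Asub k h` is the upper-left `k × k` submatrix `A_k` of `A₁₅`. -/
def Asub (k : ℕ) (h : k ≤ 15) : Matrix (Fin k) (Fin k) ℤ :=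
  A15.submatrix (Fin.castLE h) (Fin.castLE h)

/-!
Bordering a matrix is multiplied out against `B(1, 0, -adj(A) y, det A)`, which clears the last
column because `A adj(A) = det A • 1`; cancelling `det A` gives
`det B(A, x, y, z) = z det A - xᵀ adj(A) y` whenever `det A` is regular. For `A₅`, `det A₅ = 5`
and `adj(A₅)` is identified by checking `A₅ C = 5 • 1` for an explicit `C`. For fixed `y`, the
minimum of `xᵀ (C y)` over `x ∈ {0,1}⁵` is the sum of the negative entries of `C y`, and a check
of the 32 vectors `y` shows this is at least `-4`. The row and column that border `A₅` into `A₆`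
attain `-4`, so `det A₆ = 9` is the maximum.
-/

section Border

variable {n : ℕ} (A : Matrix (Fin n) (Fin n) ℤ) (x y : Fin n → ℤ) (z : ℤ)

@[simp]
lemma border_castSucc_castSucc (i j : Fin n) : border A x y z i.castSucc j.castSucc = A i j := by
  simp [border]

@[simp]
lemma border_castSucc_last (i : Fin n) : border A x y z i.castSucc (Fin.last n) = y i := by
  simp [border]

@[simp]
lemma border_last_castSucc (j : Fin n) : border A x y z (Fin.last n) j.castSucc = x j := by
  simp [border]

@[simp]
lemma border_last_last : border A x y z (Fin.last n) (Fin.last n) = z := by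
  simp [border]

@[simp]
lemma submatrix_castSucc_border : (border A x y z).submatrix Fin.castSucc Fin.castSucc = A := by
  ext i j
  simp

lemma border_submatrix_castLE {m k : ℕ} (M : Matrix (Fin m) (Fin m) ℤ) (hk : k < m) :
    border (M.submatrix (Fin.castLE hk.le) (Fin.castLE hk.le))
        (fun j => M ⟨k, hk⟩ (Fin.castLE hk.le j)) (fun i => M (Fin.castLE hk.le i) ⟨k, hk⟩)
        (M ⟨k, hk⟩ ⟨k, hk⟩) =
      M.submatrix (Fin.castLE hk) (Fin.castLE hk) := by
  ext i j
  induction i using Fin.lastCases <;> induction j using Fin.lastCases <;>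
    simp only [border_castSucc_castSucc, border_castSucc_last, border_last_castSucc,
      border_last_last, submatrix_apply] <;> rfl

lemma border_mul (B : Matrix (Fin n) (Fin n) ℤ) (u v : Fin n → ℤ) (w : ℤ) :
    border A x y z * border B u v w =
      border (A * B + vecMulVec y u) (x ᵥ* B + z • u) (A *ᵥ v + w • y) (x ⬝ᵥ v + z * w) := by
  ext i j
  induction i using Fin.lastCases <;> induction j using Fin.lastCases <;>
    simp [mul_apply, Fin.sum_univ_castSucc, mulVec, vecMul, dotProduct, vecMulVec, mul_comm]

lemma det_border_zero_col : (border A x 0 z).det = z * A.det := by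
  rw [det_succ_column _ (Fin.last n), Fin.sum_univ_castSucc]
  simp

lemma det_border_zero_row : (border A 0 y z).det = z * A.det := by
  rw [det_succ_row _ (Fin.last n), Fin.sum_univ_castSucc]
  simp

lemma det_border_mul_det :
    (border A x y z).det * A.det = A.det * (z * A.det - x ⬝ᵥ (adjugate A *ᵥ y)) := by
  have hprod : border A x y z * border 1 0 (-(adjugate A *ᵥ y)) A.det =
      border A x 0 (z * A.det - x ⬝ᵥ (adjugate A *ᵥ y)) := by
    rw [border_mul]
    simp [mulVec_neg, mulVec_mulVec, mul_adjugate, sub_eq_neg_add, mul_comm]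
  calc (border A x y z).det * A.det
      = (border A x y z).det * (border 1 0 (-(adjugate A *ᵥ y)) A.det).det := by
        rw [det_border_zero_row, det_one, mul_one]
    _ = _ := by rw [← det_mul, hprod, det_border_zero_col, mul_comm]

lemma det_border (hA : IsLeftRegular A.det) :
    (border A x y z).det = z * A.det - x ⬝ᵥ (adjugate A *ᵥ y) :=
  hA (show A.det * _ = A.det * _ by rw [mul_comm, det_border_mul_det])

end Border

lemma eq_adjugate_of_mul_eq_det_smul {R ι : Type*} [CommRing R] [Fintype ι] [DecidableEq ι]
    {A C : Matrix ι ι R} (hA : IsLeftRegular A.det) (hC : A * C = A.det • 1) : C = adjugate A :=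
  (isRegular_of_isLeftRegular_det hA).left (hC.trans (mul_adjugate A).symm)

lemma sum_min_zero_le_dotProduct {R ι : Type*} [Ring R] [LinearOrder R] [IsStrictOrderedRing R]
    [Fintype ι] {x : ι → R} (hx : ∀ i, x i ∈ Set.Icc 0 1) (v : ι → R) :
    ∑ i, min 0 (v i) ≤ x ⬝ᵥ v := by
  refine Finset.sum_le_sum fun i _ => ?_
  obtain ⟨h0, h1⟩ := hx i
  rcases le_total 0 (v i) with hv | hv
  · exact (min_le_left _ _).trans (mul_nonneg h0 hv)
  · rw [min_eq_right hv]
    simpa using mul_le_mul_of_nonpos_right h1 hv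

lemma Asub_five : Asub 5 (by norm_num) =
    !![1, 0, 1, 1, 0; 1, 1, 0, 0, 0; 0, 1, 1, 0, 1; 0, 1, 0, 1, 1; 1, 0, 0, 0, 1] := by
  decide

lemma det_Asub_five : (Asub 5 (by norm_num)).det = 5 := by
  simp [Asub_five, det_succ_row_zero, Fin.sum_univ_succ, Fin.succAbove]

lemma isLeftRegular_det_Asub_five : IsLeftRegular (Asub 5 (by norm_num)).det :=
  det_Asub_five ▸ (IsRegular.of_ne_zero (by norm_num)).left

lemma adjugate_Asub_five : adjugate (Asub 5 (by norm_num)) =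
    !![1, 2, -1, -1, 2; -1, 3, 1, 1, -2; 2, -1, 3, -2, -1; 2, -1, -2, 3, -1; -1, -2, 1, 1, 3] :=
  (eq_adjugate_of_mul_eq_det_smul isLeftRegular_det_Asub_five
    (by rw [det_Asub_five, Asub_five]; decide)).symm

lemma neg_four_le_dotProduct_adjugate_Asub_five {x y : Fin 5 → ℤ} (hx : ∀ i, x i = 0 ∨ x i = 1)
    (hy : ∀ i, y i = 0 ∨ y i = 1) : -4 ≤ x ⬝ᵥ (adjugate (Asub 5 (by norm_num)) *ᵥ y) := by
  have hcheck : ∀ y ∈ Fintype.piFinset fun _ : Fin 5 => ({0, 1} : Finset ℤ),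
      -4 ≤ ∑ i, min 0 ((adjugate (Asub 5 (by norm_num)) *ᵥ y) i) := by
    rw [adjugate_Asub_five]
    decide
  refine (hcheck y (Fintype.mem_piFinset.2 fun i => by simpa using hy i)).trans
    (sum_min_zero_le_dotProduct (fun i => ?_) _)
  rcases hx i with h | h <;> simp [h]

/-- The maximum of `det B(A_5, x, y, 1)` over `x, y ∈ {0, 1}^5` equals `9`, and it is
attained by the bordering of `A_5` that yields `A_6`. -/
theorem border_max_5 :
    IsGreatest {d : ℤ | ∃ x y : Fin 5 → ℤ,
        (∀ i, x i = 0 ∨ x i = 1) ∧ (∀ i, y i = 0 ∨ y i = 1) ∧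
        d = (border (Asub 5 (by norm_num)) x y 1).det} 9 ∧
    border (Asub 5 (by norm_num))
        (fun j => A15 ⟨5, by norm_num⟩ (Fin.castLE (by norm_num) j))
        (fun i => A15 (Fin.castLE (by norm_num) i) ⟨5, by norm_num⟩) 1
      = Asub 6 (by norm_num) ∧
    (Asub 6 (by norm_num)).det = 9 := by
  have hdet : ∀ x y, (border (Asub 5 (by norm_num)) x y 1).det =
      5 - x ⬝ᵥ (adjugate (Asub 5 (by norm_num)) *ᵥ y) := fun x y => by
    rw [det_border _ _ _ _ isLeftRegular_det_Asub_five, det_Asub_five, one_mul]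
  have hA6 : border (Asub 5 (by norm_num))
      (fun j => A15 ⟨5, by norm_num⟩ (Fin.castLE (by norm_num) j))
      (fun i => A15 (Fin.castLE (by norm_num) i) ⟨5, by norm_num⟩) 1 = Asub 6 (by norm_num) := by
    have h := border_submatrix_castLE A15 (show 5 < 15 by norm_num)
    rwa [show A15 ⟨5, by norm_num⟩ ⟨5, by norm_num⟩ = 1 from rfl] at h
  have hdet6 : (Asub 6 (by norm_num)).det = 9 := by
    rw [← hA6, hdet, adjugate_Asub_five]
    decide
  refine ⟨⟨⟨_, _, by decide, by decide, (hA6 ▸ hdet6).symm⟩, ?_⟩, hA6, hdet6⟩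
  rintro d ⟨x, y, hx, hy, rfl⟩
  linarith [hdet x y, neg_four_le_dotProduct_adjugate_Asub_five hx hy]
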